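/- arXiv:2112.09412 — 6 statements merged into one kernel-verified Lean document; each statement's English description precedes it below -/
import Mathlib

section
/- For real κ, u with u > 0 and 1 + 12κu > 0, let r₀(κ,u) = (−1 + √(1 + 12κu))/(6u) and r₂(κ,u) = u(−1 + √(1 + 12κu))/(1 + 12κu)². Define r₄(κ,u) := −u·(3·r₂² + r₂·∂²_κ r₀ + r₀·∂²_κ r₂ + (1/12)·r₀·∂⁴_κ r₀)/√(1 + 12κu), where ∂_κ denotes partial differentiation with respect to κ. Then r₄(κ,u) = 63u³·(−3 − 8κu + 3√(1 + 12κu))/(1 + 12κu)^{9/2}. -/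
/-!
Both `r₀` and `r₂` are, near `κ`, linear combinations of two powers `√(1 + 12κu)^m` with
integer `m`, and differentiating such a combination gives another one with explicit
coefficients and exponents lowered by two. So all derivatives in `𝒜₄` are explicit, and in
terms of `s = √(1 + 12κu)` (with `κ = (s² - 1)/(12u)`) the claim becomes a rational identity
in `s` and `u`.
-/

open Filter Topology

namespace QuarticStringEquation

section SqrtAffine

variable {a b k κ : ℝ}

lemma hasDerivAt_sqrt_affine_zpow (m : ℤ) (hk : 0 < a + b * k) :
    HasDerivAt (fun k => √(a + b * k) ^ m) (m * b / 2 * √(a + b * k) ^ (m - 2)) k := by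
  have hs : 0 < √(a + b * k) := Real.sqrt_pos.2 hk
  have hlin : HasDerivAt (fun k => a + b * k) b k := by
    simpa using ((hasDerivAt_id k).const_mul b).const_add a
  refine ((hasDerivAt_zpow m _ (Or.inl hs.ne')).comp k (hlin.sqrt hk.ne')).congr_deriv ?_
  rw [show m - 1 = (m - 2) + 1 by ring, zpow_add_one₀ hs.ne']
  field_simp

noncomputable def sqrtZPowComb (a b A : ℝ) (m : ℤ) (B : ℝ) (n : ℤ) (k : ℝ) : ℝ :=
  A * √(a + b * k) ^ m + B * √(a + b * k) ^ n

lemma hasDerivAt_sqrtZPowComb (A B : ℝ) (m n : ℤ) (hk : 0 < a + b * k) :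
    HasDerivAt (sqrtZPowComb a b A m B n)
      (sqrtZPowComb a b (A * (m * b / 2)) (m - 2) (B * (n * b / 2)) (n - 2) k) k := by
  unfold sqrtZPowComb
  exact (((hasDerivAt_sqrt_affine_zpow m hk).const_mul A).add
    ((hasDerivAt_sqrt_affine_zpow n hk).const_mul B)).congr_deriv (by ring)

lemma eventually_pos_affine (hκ : 0 < a + b * κ) : ∀ᶠ k in 𝓝 κ, 0 < a + b * k :=
  continuousAt_const.eventually_lt (by fun_prop) hκ

lemma deriv_eventuallyEq_sqrtZPowComb {f : ℝ → ℝ} {A B : ℝ} {m n : ℤ}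
    (hκ : 0 < a + b * κ) (hf : f =ᶠ[𝓝 κ] sqrtZPowComb a b A m B n) :
    deriv f =ᶠ[𝓝 κ] sqrtZPowComb a b (A * (m * b / 2)) (m - 2) (B * (n * b / 2)) (n - 2) := by
  filter_upwards [hf.eventuallyEq_nhds, eventually_pos_affine hκ] with k hfk hk
  rw [hfk.deriv_eq, (hasDerivAt_sqrtZPowComb A B m n hk).deriv]

end SqrtAffine

lemma genusZero_eq_sqrtZPowComb (u : ℝ) :
    (fun k : ℝ => (-1 + √(1 + 12 * k * u)) / (6 * u))
      = sqrtZPowComb 1 (12 * u) (1 / (6 * u)) 1 (-1 / (6 * u)) 0 := by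
  funext k
  simp only [sqrtZPowComb, zpow_one, zpow_zero, mul_right_comm 12 k u]
  ring

lemma genusOne_eventuallyEq_sqrtZPowComb {κ u : ℝ} (hκ : 0 < 1 + 12 * κ * u) :
    (fun k : ℝ => u * (-1 + √(1 + 12 * k * u)) / (1 + 12 * k * u) ^ 2)
      =ᶠ[𝓝 κ] sqrtZPowComb 1 (12 * u) u (-3) (-u) (-4) := by
  rw [mul_right_comm] at hκ
  filter_upwards [eventually_pos_affine hκ] with k hk
  have hs : 0 < √(1 + 12 * u * k) := Real.sqrt_pos.2 hk
  have ht := Real.sq_sqrt hk.le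
  simp only [sqrtZPowComb, mul_right_comm 12 k u, zpow_neg, zpow_ofNat]
  generalize √(1 + 12 * u * k) = s at hs ht ⊢
  rw [← ht]
  field_simp
  ring

end QuarticStringEquation

open QuarticStringEquation in
/-- For `u > 0` and `1 + 12κu > 0`, with `r₀(κ) = (-1 + √(1 + 12κu))/(6u)` and
`r₂(κ) = u(-1 + √(1 + 12κu))/(1 + 12κu)²`, the genus-two coefficient
`r₄ := -u(3r₂² + r₂·∂²_κ r₀ + r₀·∂²_κ r₂ + (1/12)r₀·∂⁴_κ r₀)/√(1 + 12κu)` equals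
`63u³(-3 - 8κu + 3√(1 + 12κu))/(1 + 12κu)^(9/2)`. -/
theorem quartic_string_equation_r4 (κ u : ℝ) (hu : 0 < u) (h : 0 < 1 + 12 * κ * u) :
    -u * (3 * ((fun k : ℝ => u * (-1 + Real.sqrt (1 + 12 * k * u)) / (1 + 12 * k * u) ^ 2) κ) ^ 2 +
          ((fun k : ℝ => u * (-1 + Real.sqrt (1 + 12 * k * u)) / (1 + 12 * k * u) ^ 2) κ) *
            deriv (deriv (fun k : ℝ => (-1 + Real.sqrt (1 + 12 * k * u)) / (6 * u))) κ +
          ((fun k : ℝ => (-1 + Real.sqrt (1 + 12 * k * u)) / (6 * u)) κ) *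
            deriv (deriv (fun k : ℝ => u * (-1 + Real.sqrt (1 + 12 * k * u)) / (1 + 12 * k * u) ^ 2)) κ +
          (1 / 12) * ((fun k : ℝ => (-1 + Real.sqrt (1 + 12 * k * u)) / (6 * u)) κ) *
            deriv (deriv (deriv (deriv (fun k : ℝ => (-1 + Real.sqrt (1 + 12 * k * u)) / (6 * u))))) κ) /
        Real.sqrt (1 + 12 * κ * u) =
      63 * u ^ 3 * (-3 - 8 * κ * u + 3 * Real.sqrt (1 + 12 * κ * u)) /
        (1 + 12 * κ * u) ^ ((9 : ℝ) / 2) := by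
  have h' : 0 < 1 + 12 * u * κ := by rwa [mul_right_comm] at h
  have d2r₀ := deriv_eventuallyEq_sqrtZPowComb h' (deriv_eventuallyEq_sqrtZPowComb h'
    (EventuallyEq.of_eq (genusZero_eq_sqrtZPowComb u)))
  have d4r₀ := deriv_eventuallyEq_sqrtZPowComb h' (deriv_eventuallyEq_sqrtZPowComb h' d2r₀)
  have d2r₂ := deriv_eventuallyEq_sqrtZPowComb h'
    (deriv_eventuallyEq_sqrtZPowComb h' (genusOne_eventuallyEq_sqrtZPowComb h))
  rw [d2r₀.eq_of_nhds, d4r₀.eq_of_nhds, d2r₂.eq_of_nhds]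
  simp only [sqrtZPowComb, mul_right_comm 12 u κ]
  norm_num
  rw [Real.rpow_div_two_eq_sqrt 9 h.le, Real.rpow_ofNat]
  have hs : 0 < √(1 + 12 * κ * u) := Real.sqrt_pos.2 h
  have ht := Real.sq_sqrt h.le
  generalize √(1 + 12 * κ * u) = s at hs ht ⊢
  obtain rfl : κ = (s ^ 2 - 1) / (12 * u) := by field_simp; linarith
  field_simp
  ring
end

section
/- Define sequences a : ℕ → ℝ and C : ℕ → ℝ by a₀ = 1, a_{k+1} = ((25k² − 1)/(8√6))·a_k − (1/2)·Σ_{m=1}^{k} a_m·a_{k+1−m} for k ≥ 0, and C₀ = −4√3, C_g = (1/(8√3))·Σ_{ℓ=1}^{g−1} C_{g−ℓ}·C_ℓ + ((5g−6)(5g−4)/(256·3^{7/2}))·C_{g−1} for g ≥ 1. Then for all g ≥ 0, C_g = −4√3 · 2^{−9g/2} · 3^{−3g} · a_g. -/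
/-!
Both sequences satisfy recursions of the shape
`u (k+1) = α k * u k + β * ∑_{m=1}^{k} u m * u (k+1-m)`, which determine `u` from `u 0`.
Rescaling `b g = c * ρ ^ g * a g` multiplies the quadratic term by `c⁻¹` (each summand carries
`ρ ^ (k+1)`) and the linear coefficient by `ρ`. With `c = -4√3` and
`ρ = 2^(-9/2) * 3^(-3) = √2 / 864` the Boutroux recursion becomes exactly the one for `C`.
-/

open Finset

def QuadraticRecurrence {R : Type*} [CommRing R] (α : ℕ → R) (β : R) (u : ℕ → R) : Prop :=
  ∀ k, u (k + 1) = α k * u k + β * ∑ m ∈ Icc 1 k, u m * u (k + 1 - m)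

namespace QuadraticRecurrence

variable {R : Type*} [CommRing R] {α : ℕ → R} {β : R} {u v : ℕ → R}

theorem eq_of_zero_eq (hu : QuadraticRecurrence α β u) (hv : QuadraticRecurrence α β v)
    (h0 : u 0 = v 0) : u = v := by
  funext n
  induction n using Nat.strong_induction_on with
  | _ n IH =>
    match n with
    | 0 => exact h0
    | k + 1 =>
      rw [hu k, hv k, IH k k.lt_succ_self]
      congr 2
      refine sum_congr rfl fun m hm => ?_
      have hm := mem_Icc.mp hm
      rw [IH m (by omega), IH (k + 1 - m) (by omega)]

theorem rescale {c ρ : R} (hu : QuadraticRecurrence α (c * β) u) :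
    QuadraticRecurrence (fun k => ρ * α k) β (fun g => c * ρ ^ g * u g) := by
  intro k
  have hsummand : ∀ m ∈ Icc 1 k, c * ρ ^ m * u m * (c * ρ ^ (k + 1 - m) * u (k + 1 - m)) =
      c * ρ ^ (k + 1) * (c * (u m * u (k + 1 - m))) := by
    intro m hm
    have hpow : ρ ^ (k + 1) = ρ ^ m * ρ ^ (k + 1 - m) := by
      rw [← pow_add, Nat.add_sub_cancel' (by grind)]
    rw [hpow]
    ring
  dsimp only
  rw [sum_congr rfl hsummand, ← mul_sum, ← mul_sum, hu k]
  ring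

end QuadraticRecurrence

theorem two_rpow_mul_three_rpow_eq_pow (g : ℕ) :
    (2 : ℝ) ^ (-(9 : ℝ) * g / 2) * (3 : ℝ) ^ (-(3 : ℝ) * g) = (√2 / 864) ^ g := by
  have h2 : (2 : ℝ) ^ (-(9 : ℝ) / 2) = √2 / 32 := by
    rw [show -(9 : ℝ) / 2 = 1 / 2 + (-5 : ℤ) by norm_num, Real.rpow_add two_pos,
      Real.rpow_intCast, ← Real.sqrt_eq_rpow]
    norm_num
    ring
  rw [show -(9 : ℝ) * g / 2 = -(9 : ℝ) / 2 * g by ring, Real.rpow_mul_natCast zero_le_two, h2,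
    Real.rpow_mul_natCast zero_le_three, ← mul_pow]
  norm_num
  ring

theorem three_rpow_seven_halves : (3 : ℝ) ^ ((7 : ℝ) / 2) = 27 * √3 := by
  rw [show (7 : ℝ) / 2 = (3 : ℕ) + 1 / 2 by norm_num, Real.rpow_add zero_lt_three,
    Real.rpow_natCast, ← Real.sqrt_eq_rpow]
  norm_num

/-- The constants `C_g` (the `𝒞_{2g}` of the quartic matrix model) defined by the
quadratic recursion with `C₀ = -4√3` coincide with the rescaled coefficients
`a_g` of the asymptotic expansion of the Boutroux tronquée solutions of
Painlevé I: `C_g = -4√3 · 2^(-9g/2) · 3^(-3g) · a_g`. -/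
theorem C2g_equals_rescaled_boutroux (a C : ℕ → ℝ)
    (ha0 : a 0 = 1)
    (ha : ∀ k : ℕ, a (k + 1) =
      ((25 * (k : ℝ) ^ 2 - 1) / (8 * Real.sqrt 6)) * a k -
        (1 / 2) * ∑ m ∈ Finset.Icc 1 k, a m * a (k + 1 - m))
    (hC0 : C 0 = -4 * Real.sqrt 3)
    (hC : ∀ g : ℕ, 1 ≤ g → C g =
      (1 / (8 * Real.sqrt 3)) * ∑ ℓ ∈ Finset.Icc 1 (g - 1), C (g - ℓ) * C ℓ +
        ((5 * (g : ℝ) - 6) * (5 * (g : ℝ) - 4) / (256 * (3 : ℝ) ^ ((7 : ℝ) / 2))) * C (g - 1)) :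
    ∀ g : ℕ, C g =
      -4 * Real.sqrt 3 * (2 : ℝ) ^ (-(9 : ℝ) * (g : ℝ) / 2) * (3 : ℝ) ^ (-(3 : ℝ) * (g : ℝ)) * a g := by
  have hC_rec : QuadraticRecurrence (fun k => (25 * (k : ℝ) ^ 2 - 1) / (6912 * √3))
      (1 / (8 * √3)) C := by
    intro k
    rw [hC (k + 1) k.succ_pos, Nat.add_sub_cancel, three_rpow_seven_halves, add_comm]
    congr 1
    · push_cast
      ring
    · rw [sum_congr rfl fun _ _ => mul_comm (C _) _]
  have ha_rec : QuadraticRecurrence (fun k => (25 * (k : ℝ) ^ 2 - 1) / (8 * √6))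
      (-4 * √3 * (1 / (8 * √3))) a := by
    intro k
    have hβ : -4 * √3 * (1 / (8 * √3)) = -(1 / 2) := by field_simp; norm_num
    rw [ha k, hβ]
    ring
  have hrescaled := ha_rec.rescale (ρ := √2 / 864)
  have hρ : (fun k : ℕ => √2 / 864 * ((25 * (k : ℝ) ^ 2 - 1) / (8 * √6))) =
      fun k : ℕ => (25 * (k : ℝ) ^ 2 - 1) / (6912 * √3) := by
    funext k
    rw [show (6 : ℝ) = 2 * 3 by norm_num, Real.sqrt_mul zero_le_two]
    field_simp
    ring
  rw [hρ] at hrescaled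
  intro g
  rw [mul_assoc (-4 * √3), two_rpow_mul_three_rpow_eq_pow,
    ← congrFun (hC_rec.eq_of_zero_eq hrescaled (by simp [hC0, ha0])) g]
end

section
/- For every real u with −1/12 < u < 1/12 and u ≠ 0, the series Σ_{j=0}^{∞} (−1)^{j+1}·3^{j+1}·(2j+1)!/(j!·(j+3)!)·u^j converges and its sum equals (−1 − 18u + (1 + 12u)^{3/2})/(216u³) − 1/(4u). -/
/-!
The coefficients are those of the binomial series of `(1 + 12u)^(3/2)` shifted by three:
`(-1)^(j+1) 3^(j+1) (2j+1)!/(j!(j+3)!) = choose (3/2) (j+3) · 12^(j+3) / 216`.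
Hence the series is the binomial expansion of `(1 + 12u)^(3/2)`, which converges for `|12u| < 1`,
with its first three terms `1 + 18u + 54u²` removed and divided by `216u³`.
-/

open Nat Polynomial

theorem Ring.choose_succ_mul_succ {K : Type*} [Field K] [CharZero K] (a : K) (n : ℕ) :
    Ring.choose a (n + 1) * (n + 1) = Ring.choose a n * (a - n) := by
  have h := Ring.descPochhammer_eq_factorial_smul_choose a (n + 1)
  rw [descPochhammer_succ_right, smeval_mul, Ring.descPochhammer_eq_factorial_smul_choose,
    smeval_sub, smeval_X, smeval_natCast] at h
  simp only [nsmul_eq_mul, factorial_succ, cast_mul, npow_one, npow_zero] at h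
  apply mul_left_cancel₀ (cast_ne_zero.2 n.factorial_ne_zero : (n ! : K) ≠ 0)
  push_cast at h
  linear_combination -h

theorem Real.hasSum_choose_mul_pow (a : ℝ) {x : ℝ} (hx : |x| < 1) :
    HasSum (fun n ↦ Ring.choose a n * x ^ n) ((1 + x) ^ a) := by
  have hmem : x ∈ Metric.eball (0 : ℝ) 1 := by
    simpa [← Real.norm_eq_abs, ← ofReal_norm] using hx
  simpa only [binomialSeries_apply, List.ofFn_const, List.prod_replicate, smul_eq_mul,
    zero_add] using (Real.one_add_rpow_hasFPowerSeriesOnBall_zero (a := a)).hasSum hmem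

theorem choose_three_halves_add_three_mul_pow (j : ℕ) :
    Ring.choose (3 / 2 : ℝ) (j + 3) * 12 ^ (j + 3) =
      216 * ((-1) ^ (j + 1) * 3 ^ (j + 1) * ((2 * j + 1)! : ℝ) / ((j ! : ℝ) * ((j + 3)! : ℝ))) := by
  induction j with
  | zero =>
    have h1 := Ring.choose_succ_mul_succ (3 / 2 : ℝ) 0
    have h2 := Ring.choose_succ_mul_succ (3 / 2 : ℝ) 1
    have h3 := Ring.choose_succ_mul_succ (3 / 2 : ℝ) 2
    simp only [Ring.choose_zero_right] at h1
    norm_num [factorial] at *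
    linarith
  | succ j ih =>
    have hrec := Ring.choose_succ_mul_succ (3 / 2 : ℝ) (j + 3)
    have hj : (j : ℝ) + 4 ≠ 0 := by positivity
    have hstep : Ring.choose (3 / 2 : ℝ) (j + 1 + 3) * 12 ^ (j + 1 + 3) =
        Ring.choose (3 / 2 : ℝ) (j + 3) * 12 ^ (j + 3) * (-6 * (2 * j + 3) / (j + 4)) := by
      rw [show j + 1 + 3 = j + 3 + 1 by ring, pow_succ]
      field_simp
      push_cast at hrec
      linear_combination 12 * hrec
    rw [hstep, ih, show 2 * (j + 1) + 1 = 2 * j + 1 + 1 + 1 by ring,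
      show j + 1 + 3 = j + 3 + 1 by ring]
    simp only [factorial_succ]
    push_cast
    field_simp
    ring

/-- Power series of the genus-zero free-energy derivative `ℰ₀` of the quartic
matrix model: for `-1/12 < u < 1/12`, `u ≠ 0`,
`Σ_{j≥0} (-1)^(j+1) 3^(j+1) (2j+1)!/(j!(j+3)!) u^j
  = (-1 - 18u + (1 + 12u)^(3/2))/(216u³) - 1/(4u)`. -/
theorem genus_zero_free_energy_series (u : ℝ)
    (h1 : -1 / 12 < u) (h2 : u < 1 / 12) (hu : u ≠ 0) :
    HasSum
      (fun j : ℕ => (-1 : ℝ) ^ (j + 1) * 3 ^ (j + 1) * (Nat.factorial (2 * j + 1) : ℝ) /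
        ((Nat.factorial j : ℝ) * (Nat.factorial (j + 3) : ℝ)) * u ^ j)
      ((-1 - 18 * u + (1 + 12 * u) ^ ((3 : ℝ) / 2)) / (216 * u ^ 3) - 1 / (4 * u)) := by
  have hbinom := Real.hasSum_choose_mul_pow (3 / 2) (x := 12 * u)
    (abs_lt.2 ⟨by linarith, by linarith⟩)
  have hhead : ∑ n ∈ Finset.range 3, Ring.choose (3 / 2 : ℝ) n * (12 * u) ^ n =
      1 + 18 * u + 54 * u ^ 2 := by
    have hc2 := Ring.choose_succ_mul_succ (3 / 2 : ℝ) 1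
    simp only [Finset.sum_range_succ, Finset.sum_range_zero, Ring.choose_zero_right,
      Ring.choose_one_right] at hc2 ⊢
    norm_num at hc2
    rw [show Ring.choose (3 / 2 : ℝ) 2 = 3 / 8 by linarith]
    ring
  have htail := ((hasSum_nat_add_iff' 3).2 hbinom).div_const (216 * u ^ 3)
  rw [hhead, show ((1 + 12 * u) ^ (3 / 2 : ℝ) - (1 + 18 * u + 54 * u ^ 2)) / (216 * u ^ 3) =
    (-1 - 18 * u + (1 + 12 * u) ^ ((3 : ℝ) / 2)) / (216 * u ^ 3) - 1 / (4 * u) by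
      field_simp; ring] at htail
  refine htail.congr_fun fun j ↦ ?_
  calc _ = Ring.choose (3 / 2 : ℝ) (j + 3) * 12 ^ (j + 3) / 216 * u ^ j := by
        rw [choose_three_halves_add_three_mul_pow]; ring
    _ = _ := by rw [mul_pow, pow_add u]; field_simp
end

section
/- For every real u with −1/12 < u < 1/12 and u ≠ 0, the series (1/2)·Σ_{j=0}^{∞} (−1)^{j+1}·12^j·(1 − (2j+2)!/(4^{j+1}·((j+1)!)²))·u^j converges and its sum equals (1 − √(1 + 12u))/(24u·(1 + 12u)). -/
/-!
Put `x = -12u`. The summand is `½ (cₖ₊₁ - 1) xᵏ` with `cₖ = (2k choose k) / 4ᵏ`, and `cₖ` is the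
`k`-th Taylor coefficient `multichoose (1/2) k` of `(1 - x)^(-1/2)`. Summing the shifted binomial
series and the geometric series gives `½ ((1/√(1-x) - 1)/x - 1/(1-x))`, which is the closed form
once `√(1-x)² = 1 - x` is used.
-/

open Nat

theorem Ring.succ_mul_multichoose_succ {K : Type*} [Field K] [CharZero K] (r : K) (n : ℕ) :
    (n + 1) * Ring.multichoose r (n + 1) = (r + n) * Ring.multichoose r n := by
  have h (m : ℕ) : (m ! : K) * Ring.multichoose r m = (ascPochhammer K m).eval r := by
    rw [← Polynomial.ascPochhammer_smeval_eq_eval,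
      ← Ring.factorial_nsmul_multichoose_eq_ascPochhammer, nsmul_eq_mul]
  have hsucc := h (n + 1)
  rw [ascPochhammer_succ_eval, ← h n, factorial_succ, cast_mul, cast_succ] at hsucc
  exact mul_left_cancel₀ (cast_ne_zero.mpr n.factorial_ne_zero) (by linear_combination hsucc)

theorem Ring.multichoose_one_div_two {K : Type*} [Field K] [CharZero K] (n : ℕ) :
    Ring.multichoose (1 / 2 : K) n = centralBinom n / 4 ^ n := by
  induction n with
  | zero => simp
  | succ n ih =>
    have hrec := Ring.succ_mul_multichoose_succ (1 / 2 : K) n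
    have hcb : ((n + 1 : ℕ) : K) * centralBinom (n + 1) = 2 * (2 * n + 1) * centralBinom n := by
      exact_mod_cast succ_mul_centralBinom_succ n
    rw [ih] at hrec
    push_cast at hcb
    apply mul_left_cancel₀ (n.cast_add_one_ne_zero : (n : K) + 1 ≠ 0)
    rw [hrec, pow_succ]
    field_simp
    linear_combination (-2 : K) * hcb

theorem Nat.cast_centralBinom_eq_factorial_div {K : Type*} [Field K] [CharZero K] (n : ℕ) :
    (centralBinom n : K) = (2 * n)! / (n !) ^ 2 := by
  rw [centralBinom_eq_two_mul_choose, cast_choose K (by omega), show 2 * n - n = n by omega, sq]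

theorem hasSum_centralBinom_div_mul_pow {x : ℝ} (hx : |x| < 1) :
    HasSum (fun n => centralBinom n / 4 ^ n * x ^ n) (1 / √(1 - x)) := by
  have h := (Real.one_div_one_sub_rpow_hasFPowerSeriesOnBall_zero (1 / 2)).hasSum
    (y := x) (by simpa [enorm_eq_nnnorm, ← NNReal.coe_lt_coe] using hx)
  simp only [FormalMultilinearSeries.ofScalars_apply_eq, ← Ring.multichoose_eq,
    Ring.multichoose_one_div_two, smul_eq_mul, zero_add] at h
  rwa [Real.sqrt_eq_rpow]

theorem hasSum_centralBinom_succ_div_mul_pow {x : ℝ} (hx : |x| < 1) (hx0 : x ≠ 0) :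
    HasSum (fun n => centralBinom (n + 1) / 4 ^ (n + 1) * x ^ n) ((1 / √(1 - x) - 1) / x) := by
  have h := (hasSum_nat_add_iff' 1).mpr (hasSum_centralBinom_div_mul_pow hx)
  simp only [Finset.sum_range_one, centralBinom_zero, pow_zero, cast_one, div_one,
    mul_one] at h
  refine (h.div_const x).congr_fun fun n => ?_
  field_simp
  ring

/-- Power series of the genus-one free-energy derivative `ℰ₂` of the quartic
matrix model: for `-1/12 < u < 1/12`, `u ≠ 0`,
`(1/2) Σ_{j≥0} (-1)^(j+1) 12^j (1 - (2j+2)!/(4^(j+1)((j+1)!)²)) u^j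
  = (1 - √(1 + 12u))/(24u(1 + 12u))`. -/
theorem genus_one_free_energy_series (u : ℝ)
    (h1 : -1 / 12 < u) (h2 : u < 1 / 12) (hu : u ≠ 0) :
    HasSum
      (fun j : ℕ => (1 / 2 : ℝ) * ((-1 : ℝ) ^ (j + 1) * 12 ^ j *
        (1 - (Nat.factorial (2 * j + 2) : ℝ) /
          (4 ^ (j + 1) * ((Nat.factorial (j + 1) : ℝ)) ^ 2)) * u ^ j))
      ((1 - Real.sqrt (1 + 12 * u)) / (24 * u * (1 + 12 * u))) := by
  have hx : |-(12 * u)| < 1 := by rw [abs_lt]; constructor <;> linarith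
  have hsum := ((hasSum_centralBinom_succ_div_mul_pow hx (by simpa using hu)).sub
    (hasSum_geometric_of_abs_lt_one hx)).mul_left (1 / 2)
  have hpos : 0 < 1 + 12 * u := by linarith
  have hval : (1 - √(1 + 12 * u)) / (24 * u * (1 + 12 * u)) =
      1 / 2 * ((1 / √(1 - -(12 * u)) - 1) / -(12 * u) - (1 - -(12 * u))⁻¹) := by
    have hs0 := Real.sqrt_pos.mpr hpos
    rw [sub_neg_eq_add]
    field_simp
    linear_combination (-24 : ℝ) * Real.sq_sqrt hpos.le
  rw [hval]
  refine hsum.congr_fun fun j => ?_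
  rw [show 2 * j + 2 = 2 * (j + 1) by ring, div_mul_eq_div_div_swap,
    ← cast_centralBinom_eq_factorial_div, neg_mul_eq_neg_mul, mul_pow, neg_pow (12 : ℝ)]
  ring
end

section
/- Define M_j = 12^j·(2j+2)!·(28j+37)/(360·(j+1)·(j−1)!) − 13·j·(j+1)·j!·48^{j−1} for integers j ≥ 1. Then M_j/(48^{j+1}·(j+1)!·(j+1)^{3/2}) tends to 7/(1080·√π) as j → ∞. -/
/-!
Put `n = j + 1`. Since `(2n)! = C(2n, n) (n!)²` and `48ⁿ = 48 · 4ʲ · 12ʲ`, the normalized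
count is exactly `(C(2n, n) √n / 4ⁿ) · j(28j + 37) / (4320 n²) - 13 j / (2304 n √n)`.
The second term is `O(n^(-1/2))`, and Stirling's formula gives `C(2n, n) √n / 4ⁿ → 1/√π`,
because this quantity is precisely `stirlingSeq (2n) / stirlingSeq n ^ 2`. Hence the limit is
`(28/4320)/√π = 7/(1080√π)`.
-/

open Filter Real Nat

theorem centralBinom_mul_factorial_sq (n : ℕ) : centralBinom n * n ! ^ 2 = (2 * n)! := by
  rw [sq, ← mul_assoc, centralBinom_eq_two_mul_choose, two_mul,
    Nat.add_choose_mul_factorial_mul_factorial]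

theorem stirlingSeq_two_mul_div_sq {n : ℕ} (hn : n ≠ 0) :
    Stirling.stirlingSeq (2 * n) / Stirling.stirlingSeq n ^ 2 = centralBinom n * √n / 4 ^ n := by
  have hsqrt : √(2 * (2 * n : ℕ) : ℝ) = 2 * √n := by
    rw [Nat.cast_mul, ← mul_assoc, sqrt_mul' _ n.cast_nonneg]
    norm_num
  have hpow : ((2 * n : ℕ) / exp 1 : ℝ) ^ (2 * n) = 4 ^ n * ((n / exp 1) ^ n) ^ 2 := by
    rw [Nat.cast_mul, Nat.cast_two, mul_div_assoc, mul_pow, ← pow_mul _ n 2, mul_comm n 2,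
      pow_mul (2 : ℝ) 2 n]
    norm_num
  have hfac : ((2 * n)! : ℝ) = centralBinom n * n ! ^ 2 := by
    exact_mod_cast (centralBinom_mul_factorial_sq n).symm
  have hn' : (n : ℝ) ≠ 0 := by exact_mod_cast hn
  simp only [Stirling.stirlingSeq, hsqrt, hfac, hpow, div_pow, mul_pow,
    sq_sqrt (by positivity : (0 : ℝ) ≤ 2 * n)]
  field_simp
  rw [sq_sqrt n.cast_nonneg]

theorem tendsto_centralBinom_mul_sqrt_div_four_pow :
    Tendsto (fun n : ℕ => centralBinom n * √n / 4 ^ n) atTop (nhds (√π)⁻¹) := by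
  have hπ : √π ≠ 0 := by positivity
  have h := (Stirling.tendsto_stirlingSeq_sqrt_pi.comp
    (tendsto_id.const_mul_atTop' two_pos)).div (Stirling.tendsto_stirlingSeq_sqrt_pi.pow 2)
    (pow_ne_zero 2 hπ)
  rw [sq, div_mul_cancel_left₀ hπ] at h
  exact h.congr' ((eventually_ne_atTop 0).mono fun n hn => stirlingSeq_two_mul_div_sq hn)

/-- The paper's closed form `M_j` for `𝒩_{j+1}(2)`. -/
noncomputable def genusTwoCount (j : ℕ) : ℝ :=
  12 ^ j * ((2 * j + 2)! : ℝ) * (28 * j + 37) / (360 * (j + 1) * (j - 1)!) -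
    13 * j * (j + 1) * j ! * 48 ^ (j - 1)

theorem genusTwoCount_div_eq {j : ℕ} (hj : j ≠ 0) :
    genusTwoCount j / (48 ^ (j + 1) * (j + 1)! * ((j : ℝ) + 1) ^ ((3 : ℝ) / 2)) =
      centralBinom (j + 1) * √(j + 1 : ℝ) / 4 ^ (j + 1) *
          (j * (28 * j + 37) / (4320 * (j + 1) ^ 2)) -
        13 * j / (2304 * (j + 1)) / √(j + 1 : ℝ) := by
  obtain ⟨k, rfl⟩ := exists_eq_succ_of_ne_zero hj
  have hfac : ((2 * (k + 2))! : ℝ) = centralBinom (k + 2) * (k + 2)! ^ 2 := by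
    exact_mod_cast (centralBinom_mul_factorial_sq (k + 2)).symm
  have hrpow : (k + 2 : ℝ) ^ ((3 : ℝ) / 2) = (k + 2) * √(k + 2 : ℝ) := by
    rw [show (3 : ℝ) / 2 = 1 + 1 / 2 by norm_num, rpow_add (by positivity), rpow_one,
      ← sqrt_eq_rpow]
  have hs : √(k + 2 : ℝ) ^ 2 = k + 2 := sq_sqrt (by positivity)
  simp only [genusTwoCount, succ_sub_one, show 2 * (k + 1) + 2 = 2 * (k + 2) by ring, hfac,
    factorial_succ, pow_succ]
  push_cast
  rw [show (k + 1 + 1 : ℝ) = k + 2 by ring, hrpow]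
  field_simp
  rw [hs, show (48 : ℝ) ^ k = 4 ^ k * 12 ^ k by rw [← mul_pow]; norm_num]
  ring

/-- Asymptotics of the number `M_j = 𝒩_{j+1}(2)` of connected labeled 4-valent
graphs with `j+1` vertices on a genus-two surface (and not on lower genus):
`M_j/(48^(j+1)·(j+1)!·(j+1)^(3/2)) → 7/(1080√π)` as `j → ∞`. -/
theorem genus_two_graph_count_asymptotics :
    Tendsto
      (fun j : ℕ =>
        (12 ^ j * (Nat.factorial (2 * j + 2) : ℝ) * (28 * (j : ℝ) + 37) /
            (360 * ((j : ℝ) + 1) * (Nat.factorial (j - 1) : ℝ)) -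
          13 * (j : ℝ) * ((j : ℝ) + 1) * (Nat.factorial j : ℝ) * 48 ^ (j - 1)) /
          (48 ^ (j + 1) * (Nat.factorial (j + 1) : ℝ) * ((j : ℝ) + 1) ^ ((3 : ℝ) / 2)))
      atTop (nhds (7 / (1080 * Real.sqrt Real.pi))) := by
  have hbinom : Tendsto (fun j : ℕ => centralBinom (j + 1) * √(j + 1 : ℝ) / 4 ^ (j + 1)) atTop
      (nhds (√π)⁻¹) := by
    simpa using (tendsto_add_atTop_iff_nat 1).2 tendsto_centralBinom_mul_sqrt_div_four_pow
  have hmain : Tendsto (fun j : ℕ => (j : ℝ) * (28 * j + 37) / (4320 * (j + 1) ^ 2)) atTop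
      (nhds (7 / 1080)) := by
    have h := (tendsto_add_mul_div_add_mul_atTop_nhds (0 : ℝ) 1 1 one_ne_zero).mul
      (tendsto_add_mul_div_add_mul_atTop_nhds (37 : ℝ) 4320 28 (d := 4320) (by norm_num))
    rw [show (1 : ℝ) / 1 * (28 / 4320) = 7 / 1080 by norm_num] at h
    refine h.congr fun j => ?_
    field_simp
    ring
  have hcorr : Tendsto (fun j : ℕ => 13 * (j : ℝ) / (2304 * (j + 1)) / √(j + 1 : ℝ)) atTop
      (nhds 0) := by
    have hcoef :
        Tendsto (fun j : ℕ => 13 * (j : ℝ) / (2304 * (j + 1))) atTop (nhds (13 / 2304)) :=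
      (tendsto_add_mul_div_add_mul_atTop_nhds (0 : ℝ) 2304 13 (d := 2304) (by norm_num)).congr
        fun j => by ring
    exact hcoef.div_atTop
      (tendsto_sqrt_atTop.comp (tendsto_natCast_atTop_atTop.atTop_add tendsto_const_nhds))
  have h := (hbinom.mul hmain).sub hcorr
  rw [sub_zero, inv_mul_eq_div, div_div] at h
  exact h.congr' ((eventually_ne_atTop 0).mono fun j hj => (genusTwoCount_div_eq hj).symm)
end

section
/- Define M_j = (16·48^j·(j+3)!/(3·j!))·((2741/10)·(j+5)! − (291/10)·j·(j+4)! − (2741/1260)·(2j+9)!/(4^j·(j+4)!) − (292·j·(2j+7)!)/(315·4^j·(j+3)!)) for integers j ≥ 1. Then M_j/(48^{j+4}·(j+4)!·(j+4)^4) tends to 245/995328 as j → ∞. -/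
/-!
Write `q n = (2n choose n) / 4 ^ n`. Since `2 · (2m+1)! = (2(m+1) choose (m+1)) · (m+1)! · m!`, the two
terms of `M_j` containing `(2j+9)!` and `(2j+7)!` are `(j+5)! · O(q (j+5))` and `j · (j+4)! · O(q (j+4))`,
and `q n → 0` because `q n ^ 2 ≤ 1 / (2n+1)`. Only the first two terms survive, and after normalisation
each is a quartic in `j` over `(j+4)⁴`, giving the limit `16 / (3 · 48⁴) · (2741 - 291) / 10 = 245/995328`.
-/

open Filter Topology Nat

theorem Nat.centralBinom_sq_mul_le (n : ℕ) : n.centralBinom ^ 2 * (2 * n + 1) ≤ 16 ^ n := by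
  induction n with
  | zero => simp
  | succ n ih =>
    refine le_of_mul_le_mul_left ?_ (by positivity : 0 < (n + 1) ^ 2)
    calc (n + 1) ^ 2 * ((n + 1).centralBinom ^ 2 * (2 * (n + 1) + 1))
        = ((n + 1) * (n + 1).centralBinom) ^ 2 * (2 * n + 3) := by ring
      _ = 4 * (2 * n + 1) * (2 * n + 3) * (n.centralBinom ^ 2 * (2 * n + 1)) := by
          rw [Nat.succ_mul_centralBinom_succ]; ring
      _ ≤ 4 * (2 * n + 1) * (2 * n + 3) * 16 ^ n := by gcongr
      _ ≤ 16 * (n + 1) ^ 2 * 16 ^ n := Nat.mul_le_mul_right _ (by nlinarith)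
      _ = (n + 1) ^ 2 * 16 ^ (n + 1) := by ring

theorem centralBinom_div_four_pow_sq_le (n : ℕ) :
    ((n.centralBinom : ℝ) / 4 ^ n) ^ 2 ≤ 1 / (2 * n + 1) := by
  have h : ((n.centralBinom ^ 2 * (2 * n + 1) : ℕ) : ℝ) ≤ ((16 ^ n : ℕ) : ℝ) := by
    exact_mod_cast n.centralBinom_sq_mul_le
  rw [div_pow, div_le_div_iff₀ (by positivity) (by positivity), ← pow_mul, mul_comm n 2, pow_mul]
  push_cast at h
  norm_num
  linarith

theorem tendsto_centralBinom_div_four_pow :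
    Tendsto (fun n : ℕ => (n.centralBinom : ℝ) / 4 ^ n) atTop (𝓝 0) := by
  have hsq : Tendsto (fun n : ℕ => ((n.centralBinom : ℝ) / 4 ^ n) ^ 2) atTop (𝓝 0) :=
    squeeze_zero (fun n => by positivity)
      (fun n => (centralBinom_div_four_pow_sq_le n).trans
        (one_div_le_one_div_of_le (by positivity) (by linarith [(n.cast_nonneg : (0 : ℝ) ≤ n)])))
      tendsto_one_div_add_atTop_nhds_zero_nat
  simpa [Real.sqrt_sq_eq_abs, abs_div] using hsq.sqrt

theorem Nat.two_mul_factorial_two_mul_add_one (m : ℕ) :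
    2 * (2 * m + 1)! = (m + 1).centralBinom * (m + 1)! * m ! := by
  have h := Nat.add_choose_mul_factorial_mul_factorial (m + 1) (m + 1)
  rw [← two_mul, ← Nat.centralBinom_eq_two_mul_choose, show 2 * (m + 1) = 2 * m + 1 + 1 by ring,
    Nat.factorial_succ (2 * m + 1)] at h
  refine Nat.eq_of_mul_eq_mul_left m.succ_pos ?_
  calc (m + 1) * (2 * (2 * m + 1)!) = (2 * m + 1 + 1) * (2 * m + 1)! := by ring
    _ = (m + 1).centralBinom * (m + 1)! * (m + 1)! := h.symm
    _ = (m + 1) * ((m + 1).centralBinom * (m + 1)! * m !) := by rw [Nat.factorial_succ m]; ring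

theorem factorial_two_mul_add_one_eq (m : ℕ) :
    ((2 * m + 1)! : ℝ) = 2 * 4 ^ m * (m + 1)! * m ! * ((m + 1).centralBinom / 4 ^ (m + 1)) := by
  have h : (2 * (2 * m + 1)! : ℝ) = (m + 1).centralBinom * (m + 1)! * m ! := by
    exact_mod_cast m.two_mul_factorial_two_mul_add_one
  rw [pow_succ]
  field_simp
  linear_combination 2 * h

theorem tendsto_natCast_add_div_natCast_add (a b : ℝ) :
    Tendsto (fun n : ℕ => ((n : ℝ) + a) / (n + b)) atTop (𝓝 1) := by
  have h : Tendsto (fun n : ℕ => 1 + (a - b) / ((n : ℝ) + b)) atTop (𝓝 (1 + 0)) :=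
    tendsto_const_nhds.add (tendsto_const_nhds.div_atTop
      (tendsto_atTop_add_const_right _ _ tendsto_natCast_atTop_atTop))
  rw [add_zero] at h
  refine h.congr' ?_
  filter_upwards [eventually_gt_atTop ⌈-b⌉₊] with n hn
  have : (n : ℝ) + b ≠ 0 := by
    have := Nat.lt_of_ceil_lt hn
    linarith
  field_simp
  ring

/-- The paper's `M_j = 𝒩_{j+4}(3)`. -/
noncomputable def genusThreeCount (j : ℕ) : ℝ :=
  (16 * 48 ^ j * (Nat.factorial (j + 3) : ℝ) / (3 * (Nat.factorial j : ℝ))) *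
    ((2741 / 10) * (Nat.factorial (j + 5) : ℝ) -
      (291 / 10) * (j : ℝ) * (Nat.factorial (j + 4) : ℝ) -
      (2741 / 1260) * (Nat.factorial (2 * j + 9) : ℝ) / (4 ^ j * (Nat.factorial (j + 4) : ℝ)) -
      (292 * (j : ℝ) * (Nat.factorial (2 * j + 7) : ℝ)) /
        (315 * 4 ^ j * (Nat.factorial (j + 3) : ℝ)))

theorem genusThreeCount_div_eq (j : ℕ) :
    genusThreeCount j / (48 ^ (j + 4) * (j + 4)! * ((j : ℝ) + 4) ^ 4) =
      1 / 995328 *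
        (((j : ℝ) + 1) / (j + 4) * ((j + 2) / (j + 4)) * ((j + 3) / (j + 4)) * ((j + 5) / (j + 4)) *
            (2741 / 10 - 2741 / 1260 * 512 * ((j + 5).centralBinom / 4 ^ (j + 5))) -
          (j : ℝ) / (j + 4) * ((j + 1) / (j + 4)) * ((j + 2) / (j + 4)) * ((j + 3) / (j + 4)) *
            (291 / 10 + 292 / 315 * 128 * ((j + 4).centralBinom / 4 ^ (j + 4)))) := by
  have h9 := factorial_two_mul_add_one_eq (j + 4)
  have h7 := factorial_two_mul_add_one_eq (j + 3)
  rw [show 2 * (j + 4) + 1 = 2 * j + 9 by ring] at h9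
  rw [show 2 * (j + 3) + 1 = 2 * j + 7 by ring] at h7
  rw [genusThreeCount, h9, h7]
  simp only [Nat.factorial_succ, pow_add]
  push_cast
  field_simp
  ring

/-- Asymptotics of the number `M_j = 𝒩_{j+4}(3)` of connected labeled 4-valent
graphs with `j+4` vertices on a genus-three surface (and not on lower genus):
`M_j/(48^(j+4)·(j+4)!·(j+4)⁴) → 245/995328` as `j → ∞`. -/
theorem genus_three_graph_count_asymptotics :
    Tendsto
      (fun j : ℕ =>
        (16 * 48 ^ j * (Nat.factorial (j + 3) : ℝ) / (3 * (Nat.factorial j : ℝ))) *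
          ((2741 / 10) * (Nat.factorial (j + 5) : ℝ) -
            (291 / 10) * (j : ℝ) * (Nat.factorial (j + 4) : ℝ) -
            (2741 / 1260) * (Nat.factorial (2 * j + 9) : ℝ) /
              (4 ^ j * (Nat.factorial (j + 4) : ℝ)) -
            (292 * (j : ℝ) * (Nat.factorial (2 * j + 7) : ℝ)) /
              (315 * 4 ^ j * (Nat.factorial (j + 3) : ℝ))) /
          (48 ^ (j + 4) * (Nat.factorial (j + 4) : ℝ) * ((j : ℝ) + 4) ^ 4))
      atTop (nhds (245 / 995328)) := by
  have hratio := tendsto_natCast_add_div_natCast_add (b := 4)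
  have hq : ∀ k, Tendsto (fun j : ℕ => ((j + k).centralBinom : ℝ) / 4 ^ (j + k)) atTop (𝓝 0) :=
    fun k => tendsto_centralBinom_div_four_pow.comp (tendsto_add_atTop_nat k)
  have hlim := ((((((hratio 1).mul (hratio 2)).mul (hratio 3)).mul (hratio 5)).mul
      ((tendsto_const_nhds (x := (2741 / 10 : ℝ))).sub ((hq 5).const_mul (2741 / 1260 * 512)))).sub
    (((((tendsto_natCast_div_add_atTop (4 : ℝ)).mul (hratio 1)).mul (hratio 2)).mul (hratio 3)).mul
      ((tendsto_const_nhds (x := (291 / 10 : ℝ))).add ((hq 4).const_mul (292 / 315 * 128))))).const_mul (1 / 995328)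
  exact (hlim.congr fun j => (genusThreeCount_div_eq j).symm).mono_right (by norm_num)
end
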